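/- arXiv:2011.12907 — 2 statements merged into one kernel-verified Lean document; each statement's English description precedes it below -/
import Mathlib

section
/- Let p, a ∈ ℝ, q, b ∈ ℂ with p² + |q|² = 1, a² + |b|² = 1, and γ ∈ ℝ. Define p_γ := p / √(p² + |q|²cosh²(2γ)) and c := |q|·a·cosh(2γ). Then |p·b| > |c| if and only if |p_γ| > |a|; |p·b| = |c| if and only if |p_γ| = |a|; and |p·b| < |c| if and only if |p_γ| < |a|. -/
/-- With `p² + |q|² = 1`, `a² + |b|² = 1`, `γ ∈ ℝ`,
`p_γ := p/√(p² + |q|²cosh²(2γ))` and `c := |q|·a·cosh(2γ)`, one has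
`|p·b| ≷ |c|` iff `|p_γ| ≷ |a|` (in all three trichotomy cases). -/
theorem pb_vs_c_iff_pgamma_vs_a
    (p a : ℝ) (q b : ℂ) (γ : ℝ)
    (hpq : p ^ 2 + ‖q‖ ^ 2 = 1)
    (hab : a ^ 2 + ‖b‖ ^ 2 = 1)
    (pγ c : ℝ)
    (hpγ : pγ = p / Real.sqrt (p ^ 2 + ‖q‖ ^ 2 * Real.cosh (2 * γ) ^ 2))
    (hc : c = ‖q‖ * a * Real.cosh (2 * γ)) :
    (|p * ‖b‖| > |c| ↔ |pγ| > |a|) ∧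
    (|p * ‖b‖| = |c| ↔ |pγ| = |a|) ∧
    (|p * ‖b‖| < |c| ↔ |pγ| < |a|) := by
  set h := Real.cosh (2 * γ) with hhdef
  have hh : 1 ≤ h := Real.one_le_cosh _
  have hh2 : 1 ≤ h ^ 2 := by nlinarith
  set D := p ^ 2 + ‖q‖ ^ 2 * h ^ 2 with hDdef
  have hD1 : 1 ≤ D := by
    have := mul_nonneg (sq_nonneg (‖q‖)) (by linarith : (0:ℝ) ≤ h ^ 2 - 1)
    rw [hDdef]; nlinarith
  have hD0 : 0 < D := by linarith
  have hs : Real.sqrt D ^ 2 = D := Real.sq_sqrt hD0.le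
  have hpγ2 : pγ ^ 2 = p ^ 2 / D := by rw [hpγ, div_pow, hs]
  have hb2 : ‖b‖ ^ 2 = 1 - a ^ 2 := by linarith
  have key : (p * ‖b‖) ^ 2 - c ^ 2 = (pγ ^ 2 - a ^ 2) * D := by
    rw [hpγ2, hc, hDdef, mul_pow, hb2]
    field_simp [(show p ^ 2 + ‖q‖ ^ 2 * h ^ 2 ≠ 0 from hD0.ne')]
    ring
  have key2 : pγ ^ 2 - a ^ 2 = ((p * ‖b‖) ^ 2 - c ^ 2) / D := by
    rw [eq_div_iff hD0.ne']; linarith [key]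
  have ilt : c ^ 2 < (p * ‖b‖) ^ 2 ↔ a ^ 2 < pγ ^ 2 := by
    constructor <;> intro hx
    · have h1 : 0 < ((p * ‖b‖) ^ 2 - c ^ 2) / D := div_pos (by linarith) hD0
      rw [← key2] at h1; linarith
    · have h1 : 0 < (pγ ^ 2 - a ^ 2) * D := mul_pos (by linarith) hD0
      rw [← key] at h1; linarith
  have igt : (p * ‖b‖) ^ 2 < c ^ 2 ↔ pγ ^ 2 < a ^ 2 := by
    constructor <;> intro hx
    · have h1 : ((p * ‖b‖) ^ 2 - c ^ 2) / D < 0 := div_neg_of_neg_of_pos (by linarith) hD0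
      rw [← key2] at h1; linarith
    · have h1 : (pγ ^ 2 - a ^ 2) * D < 0 := mul_neg_of_neg_of_pos (by linarith) hD0
      rw [← key] at h1; linarith
  have ieq : (p * ‖b‖) ^ 2 = c ^ 2 ↔ pγ ^ 2 = a ^ 2 := by
    constructor <;> intro hx
    · have h1 : (pγ ^ 2 - a ^ 2) * D = 0 := by linarith
      rcases mul_eq_zero.1 h1 with h2 | h2
      · linarith
      · exact absurd h2 hD0.ne'
    · have h1 : (pγ ^ 2 - a ^ 2) * D = 0 := by
        rw [show pγ ^ 2 - a ^ 2 = 0 by linarith]; ring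
      linarith [key]
  refine ⟨?_, ?_, ?_⟩
  · rw [gt_iff_lt, gt_iff_lt, ← sq_lt_sq, ← sq_lt_sq]; exact ilt
  · rw [← sq_eq_sq_iff_abs_eq_abs, ← sq_eq_sq_iff_abs_eq_abs]; exact ieq
  · rw [← sq_lt_sq, ← sq_lt_sq]; exact igt
end

section
/- Let P, B, c ∈ ℝ with 0 < |P| ≤ B, B > 0, and |c| ≠ |P|. Consider the loop F : [0,2π] → ℂ \ {0}, F(t) := P cos t + i B sin t − c. If |c| < |P| the winding number of F around 0 equals sign(P), and if |c| > |P| the winding number of F around 0 equals 0. -/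
open Real Complex intervalIntegral

lemma wne_key {g g' : ℝ → ℂ}
    (hd : ∀ t, HasDerivAt g (g' t) t) (hcont : Continuous g')
    (hs : ∀ t, g t ∈ Complex.slitPlane)
    (hper : g (2*Real.pi) = g 0) :
    ∫ t in (0:ℝ)..(2*Real.pi), g' t / g t = 0 := by
  have hgne : ∀ t, g t ≠ 0 := fun t => Complex.slitPlane_ne_zero (hs t)
  have hgcont : Continuous g := continuous_iff_continuousAt.mpr fun t => (hd t).continuousAt
  have hL : ∀ t ∈ Set.uIcc (0:ℝ) (2*Real.pi),
      HasDerivAt (fun t => Complex.log (g t)) (g' t / g t) t := by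
    intro t _
    have := (Complex.hasDerivAt_log (hs t)).comp t (hd t)
    simpa [div_eq_inv_mul, mul_comm, Function.comp_def] using this
  have hint : IntervalIntegrable (fun t => g' t / g t) MeasureTheory.volume 0 (2*Real.pi) :=
    (hcont.div hgcont hgne).intervalIntegrable _ _
  rw [intervalIntegral.integral_eq_sub_of_hasDerivAt hL hint, hper, sub_self]

lemma wne_key2 {g g' : ℝ → ℂ}
    (hd : ∀ t, HasDerivAt g (g' t) t) (hcont : Continuous g')
    (hs : (∀ t, 0 < (g t).re) ∨ (∀ t, (g t).re < 0))
    (hper : g (2*Real.pi) = g 0) :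
    ∫ t in (0:ℝ)..(2*Real.pi), g' t / g t = 0 := by
  rcases hs with hs | hs
  · exact wne_key hd hcont (fun t => Or.inl (hs t)) hper
  · have := wne_key (g := fun t => -g t) (g' := fun t => -g' t)
      (fun t => (hd t).neg) hcont.neg
      (fun t => Or.inl (by simpa using hs t)) (by simp [hper])
    simpa [neg_div_neg_eq] using this

lemma wne_main {F F' : ℝ → ℂ} (s : ℂ)
    (hFd : ∀ t, HasDerivAt F (F' t) t) (hFc : Continuous F')
    (hs : (∀ t, 0 < (F t * Complex.exp (s*t)).re) ∨
          (∀ t, (F t * Complex.exp (s*t)).re < 0))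
    (hper : F (2*Real.pi) = F 0)
    (hexp : Complex.exp (s * ((2*Real.pi : ℝ) : ℂ)) = 1) :
    ∫ t in (0:ℝ)..(2*Real.pi), F' t / F t = -s * ((2*Real.pi : ℝ) : ℂ) := by
  set G : ℝ → ℂ := fun t => F t * Complex.exp (s*t) with hG
  set G' : ℝ → ℂ := fun t => F' t * Complex.exp (s*t) + F t * (s * Complex.exp (s*t)) with hG'
  have hE : ∀ t : ℝ, HasDerivAt (fun t : ℝ => Complex.exp (s*(t:ℂ))) (s * Complex.exp (s*(t:ℂ))) t := by
    intro t
    have h1 : HasDerivAt (fun z : ℂ => Complex.exp (s*z)) (s * Complex.exp (s*(t:ℂ))) (t:ℂ) := by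
      simpa [mul_comm, Function.comp_def] using (Complex.hasDerivAt_exp (s*(t:ℂ))).comp (t:ℂ)
        ((hasDerivAt_id ((t:ℂ))).const_mul s)
    exact h1.comp_ofReal
  have hGd : ∀ t, HasDerivAt G (G' t) t := fun t => (hFd t).mul (hE t)
  have hGc : Continuous G' := by
    have hFcc : Continuous F := continuous_iff_continuousAt.mpr fun t => (hFd t).continuousAt
    fun_prop
  have hGne : ∀ t, G t ≠ 0 := by
    intro t h
    have h0 : (F t * Complex.exp (s*t)).re = 0 := by
      have := congrArg Complex.re h
      simpa [hG] using this
    rcases hs with h1 | h1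
    · exact (h1 t).ne' h0
    · exact (h1 t).ne h0
  have hFne : ∀ t, F t ≠ 0 := by
    intro t h
    exact hGne t (by simp [hG, h])
  have hGper : G (2*Real.pi) = G 0 := by
    have hexp' : Complex.exp (s * (2*(Real.pi:ℂ))) = 1 := by
      have := hexp; push_cast at this; exact this
    simp [hG, hper, hexp']
  have hzero : ∫ t in (0:ℝ)..(2*Real.pi), G' t / G t = 0 :=
    wne_key2 hGd hGc hs hGper
  have hpt : ∀ t : ℝ, F' t / F t = G' t / G t - s := by
    intro t
    have hEne : Complex.exp (s*(t:ℂ)) ≠ 0 := Complex.exp_ne_zero _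
    rw [hG, hG']
    field_simp [hFne t, hEne]
    ring
  have hFcc : Continuous F := continuous_iff_continuousAt.mpr fun t => (hFd t).continuousAt
  have hint1 : IntervalIntegrable (fun t => G' t / G t) MeasureTheory.volume 0 (2*Real.pi) := by
    have hGcc : Continuous G := continuous_iff_continuousAt.mpr fun t => (hGd t).continuousAt
    exact (hGc.div hGcc hGne).intervalIntegrable _ _
  calc ∫ t in (0:ℝ)..(2*Real.pi), F' t / F t
      = ∫ t in (0:ℝ)..(2*Real.pi), (G' t / G t - s) :=
        intervalIntegral.integral_congr (fun t _ => hpt t)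
    _ = (∫ t in (0:ℝ)..(2*Real.pi), G' t / G t) - ∫ t in (0:ℝ)..(2*Real.pi), (s:ℂ) :=
        intervalIntegral.integral_sub hint1 (intervalIntegrable_const)
    _ = -s * ((2*Real.pi : ℝ) : ℂ) := by
        rw [hzero, intervalIntegral.integral_const]
        simp [Complex.real_smul]
        ring

/-- Winding number of the ellipse loop
`F(t) = P cos t + i B sin t − c` (with `0 < |P| ≤ B`, `|c| ≠ |P|`) around the
origin, expressed by the integral formula
`wn(F) = (1/(2πi)) ∫₀^{2π} F'(t)/F(t) dt`:
it equals `sign P` if `|c| < |P|`, and `0` if `|c| > |P|`. -/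
theorem winding_number_of_ellipse
    (P B c : ℝ) (hP : 0 < |P|) (hPB : |P| ≤ B) (hc : |c| ≠ |P|)
    (F : ℝ → ℂ)
    (hF : ∀ t, F t = (P : ℂ) * Real.cos t + Complex.I * B * Real.sin t - c) :
    (|c| < |P| →
      (1 / (2 * Real.pi * Complex.I)) * ∫ t in (0 : ℝ)..(2 * Real.pi),
        deriv F t / F t = (Real.sign P : ℂ)) ∧
    (|P| < |c| →
      (1 / (2 * Real.pi * Complex.I)) * ∫ t in (0 : ℝ)..(2 * Real.pi),
        deriv F t / F t = 0) := by
  set F' : ℝ → ℂ := fun t => (P:ℂ) * ((-Real.sin t : ℝ) : ℂ) + Complex.I * B * ((Real.cos t : ℝ) : ℂ) with hF'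
  have hFd : ∀ t, HasDerivAt F (F' t) t := by
    intro t
    have h1 : HasDerivAt (fun t : ℝ => ((Real.cos t : ℝ) : ℂ)) ((-Real.sin t : ℝ) : ℂ) t :=
      (Real.hasDerivAt_cos t).ofReal_comp
    have h2 : HasDerivAt (fun t : ℝ => ((Real.sin t : ℝ) : ℂ)) ((Real.cos t : ℝ) : ℂ) t :=
      (Real.hasDerivAt_sin t).ofReal_comp
    have h3 := ((h1.const_mul ((P:ℂ))).add (h2.const_mul (Complex.I * B))).sub_const (c:ℂ)
    have hFeq : F = fun t : ℝ => (P:ℂ) * Real.cos t + Complex.I * B * Real.sin t - c := funext hF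
    rw [hFeq]
    simpa [hF'] using h3
  have hFc : Continuous F' := by rw [hF']; fun_prop
  have hderiv : ∀ t, deriv F t = F' t := fun t => (hFd t).deriv
  have hIeq : (∫ t in (0:ℝ)..(2*Real.pi), deriv F t / F t) = ∫ t in (0:ℝ)..(2*Real.pi), F' t / F t :=
    intervalIntegral.integral_congr (fun t _ => by rw [hderiv t])
  have hper : F (2*Real.pi) = F 0 := by
    simp [hF, Real.cos_two_pi, Real.sin_two_pi]
  have hPne : P ≠ 0 := fun h => by simp [h] at hP
  have hB : 0 < B := lt_of_lt_of_le hP hPB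
  constructor
  · intro hlt
    rcases hPne.lt_or_gt with hP0 | hP0
    · -- P < 0, winding number -1
      have hcb := abs_lt.mp (by rwa [abs_of_neg hP0] at hlt)
      have hexp : Complex.exp (Complex.I * ((2*Real.pi : ℝ) : ℂ)) = 1 := by
        rw [show Complex.I * ((2*Real.pi : ℝ) : ℂ) = 2*(Real.pi:ℂ)*Complex.I by push_cast; ring,
          Complex.exp_two_pi_mul_I]
      have hs : ∀ t : ℝ, (F t * Complex.exp (Complex.I * (t:ℂ))).re < 0 := by
        intro t
        have hre : (F t * Complex.exp (Complex.I * (t:ℂ))).re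
            = P * Real.cos t ^ 2 - B * Real.sin t ^ 2 - c * Real.cos t := by
          simp [hF t, Complex.exp_re, Complex.exp_im, Complex.mul_re, Complex.mul_im,
            Complex.add_re, Complex.add_im, Complex.sub_re, Complex.sub_im,
            Complex.cos_ofReal_re, Complex.sin_ofReal_re, Complex.cos_ofReal_im,
            Complex.sin_ofReal_im]
          ring
        rw [hre]
        have h1 := Real.sin_sq_add_cos_sq t
        have hPB' : -P ≤ B := by rwa [abs_of_neg hP0] at hPB
        have hlt' : |c| < -P := by rwa [abs_of_neg hP0] at hlt
        have h4 : |c * Real.cos t| ≤ |c| := by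
          rw [abs_mul]
          calc |c| * |Real.cos t| ≤ |c| * 1 :=
                mul_le_mul_of_nonneg_left (Real.abs_cos_le_one t) (abs_nonneg c)
            _ = |c| := mul_one _
        nlinarith [mul_nonneg (by linarith : (0:ℝ) ≤ B + P) (sq_nonneg (Real.sin t)),
          neg_abs_le (c * Real.cos t), le_abs_self (c * Real.cos t)]
      have hint := wne_main Complex.I hFd hFc (Or.inr hs) hper hexp
      rw [hIeq, hint, Real.sign_of_neg hP0]
      have h2pI : (2*(Real.pi:ℂ)*Complex.I) ≠ 0 := by
        simp [Real.pi_ne_zero, Complex.I_ne_zero]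
      push_cast
      rw [one_div, inv_mul_eq_div, div_eq_iff h2pI]
      ring
    · -- P > 0, winding number 1
      have hcb := abs_lt.mp (by rwa [abs_of_pos hP0] at hlt)
      have hexp : Complex.exp ((-Complex.I) * ((2*Real.pi : ℝ) : ℂ)) = 1 := by
        rw [show (-Complex.I) * ((2*Real.pi : ℝ) : ℂ) = -(2*(Real.pi:ℂ)*Complex.I) by push_cast; ring,
          Complex.exp_neg, Complex.exp_two_pi_mul_I, inv_one]
      have hs : ∀ t : ℝ, 0 < (F t * Complex.exp ((-Complex.I) * (t:ℂ))).re := by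
        intro t
        have hre : (F t * Complex.exp ((-Complex.I) * (t:ℂ))).re
            = P * Real.cos t ^ 2 + B * Real.sin t ^ 2 - c * Real.cos t := by
          simp [hF t, Complex.exp_re, Complex.exp_im, Complex.mul_re, Complex.mul_im,
            Complex.add_re, Complex.add_im, Complex.sub_re, Complex.sub_im,
            Complex.cos_ofReal_re, Complex.sin_ofReal_re, Complex.cos_ofReal_im,
            Complex.sin_ofReal_im]
          ring
        rw [hre]
        have h1 := Real.sin_sq_add_cos_sq t
        have hPB' : P ≤ B := by rwa [abs_of_pos hP0] at hPB
        have hlt' : |c| < P := by rwa [abs_of_pos hP0] at hlt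
        have h4 : |c * Real.cos t| ≤ |c| := by
          rw [abs_mul]
          calc |c| * |Real.cos t| ≤ |c| * 1 :=
                mul_le_mul_of_nonneg_left (Real.abs_cos_le_one t) (abs_nonneg c)
            _ = |c| := mul_one _
        nlinarith [mul_nonneg (by linarith : (0:ℝ) ≤ B - P) (sq_nonneg (Real.sin t)),
          neg_abs_le (c * Real.cos t), le_abs_self (c * Real.cos t)]
      have hint := wne_main (-Complex.I) hFd hFc (Or.inl hs) hper hexp
      rw [hIeq, hint, Real.sign_of_pos hP0]
      have h2pI : (2*(Real.pi:ℂ)*Complex.I) ≠ 0 := by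
        simp [Real.pi_ne_zero, Complex.I_ne_zero]
      push_cast
      rw [one_div, inv_mul_eq_div, div_eq_iff h2pI]
      ring
  · intro hlt
    have hc0 : c ≠ 0 := by
      intro h
      rw [h, abs_zero] at hlt
      exact absurd hlt (not_lt.mpr (abs_nonneg P))
    have hexp : Complex.exp ((0:ℂ) * ((2*Real.pi : ℝ) : ℂ)) = 1 := by simp
    have hre : ∀ t : ℝ, (F t * Complex.exp ((0:ℂ) * (t:ℂ))).re = P * Real.cos t - c := by
      intro t
      simp [hF t, Complex.add_re, Complex.sub_re, Complex.mul_re,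
        Complex.cos_ofReal_re, Complex.sin_ofReal_re, Complex.cos_ofReal_im,
        Complex.sin_ofReal_im]
    have hPcos : ∀ t : ℝ, |P * Real.cos t| ≤ |P| := by
      intro t
      rw [abs_mul]
      calc |P| * |Real.cos t| ≤ |P| * 1 := by
            exact mul_le_mul_of_nonneg_left (Real.abs_cos_le_one t) (abs_nonneg P)
        _ = |P| := mul_one _
    have hs : (∀ t : ℝ, 0 < (F t * Complex.exp ((0:ℂ) * (t:ℂ))).re) ∨
        (∀ t : ℝ, (F t * Complex.exp ((0:ℂ) * (t:ℂ))).re < 0) := by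
      rcases hc0.lt_or_gt with hcneg | hcpos
      · left
        intro t
        rw [hre t]
        have := hPcos t
        rw [abs_of_neg hcneg] at hlt
        have := abs_le.mp this
        linarith [this.1]
      · right
        intro t
        rw [hre t]
        have := hPcos t
        rw [abs_of_pos hcpos] at hlt
        have := abs_le.mp this
        linarith [this.2]
    have hint := wne_main (0:ℂ) hFd hFc hs hper hexp
    rw [hIeq, hint]
    simp
end
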